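/- arXiv:2302.06061 — 14 statements merged into one kernel-verified Lean document; each statement's English description precedes it below -/
import Mathlib

section
/- There is no reward scheme x that simultaneously satisfies profitable opportunity (PO), Sybil-proofness (SP), and collusion-proofness (CP). That is, there is no function x(i,n), defined for natural numbers 1 ≤ i ≤ n and taking real values, such that: x(i,n) > 0 for all 1 ≤ i ≤ n; x(i,n) ≥ Σ_{k=0}^{λ} x(i+k, n+λ) for all λ ≥ 1 and all 1 ≤ i ≤ n; and x(i,n) ≤ Σ_{k=0}^{γ} x(i+k, n+γ) for all γ ≥ 1 and all 1 ≤ i ≤ n. -/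
/-- There is no reward scheme `x(i,n)` (defined for `1 ≤ i ≤ n`) that simultaneously
satisfies profitable opportunity (PO), Sybil-proofness (SP) and collusion-proofness (CP). -/
theorem no_PO_SP_CP :
    ¬ ∃ x : ℕ → ℕ → ℝ,
      (∀ i n : ℕ, 1 ≤ i → i ≤ n → 0 < x i n) ∧
      (∀ lam i n : ℕ, 1 ≤ lam → 1 ≤ i → i ≤ n →
        ∑ k ∈ Finset.range (lam + 1), x (i + k) (n + lam) ≤ x i n) ∧
      (∀ gam i n : ℕ, 1 ≤ gam → 1 ≤ i → i ≤ n →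
        x i n ≤ ∑ k ∈ Finset.range (gam + 1), x (i + k) (n + gam)) := by
  rintro ⟨x, hPO, hSP, hCP⟩
  have h1 := hSP 1 1 1 le_rfl le_rfl le_rfl
  have h2 := hSP 1 1 2 le_rfl le_rfl (by norm_num)
  have h3 := hSP 1 2 2 le_rfl (by norm_num) le_rfl
  have h4 := hCP 2 1 1 (by norm_num) le_rfl le_rfl
  have hp := hPO 2 3 (by norm_num) (by norm_num)
  simp [Finset.sum_range_succ] at h1 h2 h3 h4
  linarith
end

section
/- Let 0 < α < 1 and β : ℕ → ℝ, and define the TDGM reward x(i,n) = α^{n-i}·β(n) for 1 ≤ i ≤ n. Then x is Sybil-proof, i.e. x(i,n) ≥ Σ_{k=0}^{m} x(i+k, n+m) for all m ≥ 1 and all 1 ≤ i ≤ n, if and only if β(n) - β(n+m)·(1-α^{m+1})/(1-α) ≥ 0 for all n ≥ 1 and all m ≥ 1. -/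
lemma TDGM_sum (α : ℝ) (hα1 : α < 1) (β : ℕ → ℝ) (x : ℕ → ℕ → ℝ)
    (hx : ∀ i n : ℕ, x i n = α ^ (n - i) * β n) (m i n : ℕ) (hin : i ≤ n) :
    ∑ k ∈ Finset.range (m + 1), x (i + k) (n + m) =
      α ^ (n - i) * (β (n + m) * (1 - α ^ (m + 1)) / (1 - α)) := by
  have h1 : ∀ k ∈ Finset.range (m + 1),
      x (i + k) (n + m) = α ^ (n - i) * (α ^ (m - k) * β (n + m)) := by
    intro k hk
    have hk' : k ≤ m := Nat.lt_succ_iff.mp (Finset.mem_range.mp hk)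
    rw [hx]
    have : n + m - (i + k) = (n - i) + (m - k) := by omega
    rw [this, pow_add, mul_assoc]
  rw [Finset.sum_congr rfl h1, ← Finset.mul_sum, ← Finset.sum_mul]
  have h2 : ∑ k ∈ Finset.range (m + 1), α ^ (m - k) =
      ∑ k ∈ Finset.range (m + 1), α ^ k := by
    rw [← Finset.sum_range_reflect]
    apply Finset.sum_congr rfl
    intro k hk
    have hk' := Finset.mem_range.mp hk
    congr 1
    omega
  rw [h2, geom_sum_eq hα1.ne]
  have hne : (1 : ℝ) - α ≠ 0 := by linarith
  have hne' : α - 1 ≠ 0 := by linarith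
  have h3 : (α ^ (m + 1) - 1) / (α - 1) = (1 - α ^ (m + 1)) / (1 - α) := by
    rw [div_eq_div_iff hne' hne]; ring
  rw [h3]; ring

/-- The TDGM `x(i,n) = α^{n-i}·β(n)` is Sybil-proof iff
`β(n) - β(n+m)·(1-α^{m+1})/(1-α) ≥ 0` for all `n, m ≥ 1`. -/
theorem TDGM_SP_iff (α : ℝ) (hα0 : 0 < α) (hα1 : α < 1)
    (β : ℕ → ℝ) (x : ℕ → ℕ → ℝ)
    (hx : ∀ i n : ℕ, x i n = α ^ (n - i) * β n) :
    (∀ m i n : ℕ, 1 ≤ m → 1 ≤ i → i ≤ n →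
      ∑ k ∈ Finset.range (m + 1), x (i + k) (n + m) ≤ x i n) ↔
    (∀ n m : ℕ, 1 ≤ n → 1 ≤ m →
      0 ≤ β n - β (n + m) * (1 - α ^ (m + 1)) / (1 - α)) := by
  constructor
  · intro h n m hn hm
    have := h m n n hm hn le_rfl
    rw [TDGM_sum α hα1 β x hx m n n le_rfl, hx] at this
    simp at this
    linarith
  · intro h m i n hm hi hin
    have key := h n m (hi.trans hin) hm
    rw [TDGM_sum α hα1 β x hx m i n hin, hx]
    have hpow : (0:ℝ) < α ^ (n - i) := pow_pos hα0 _
    have : β (n + m) * (1 - α ^ (m + 1)) / (1 - α) ≤ β n := by linarith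
    calc α ^ (n - i) * (β (n + m) * (1 - α ^ (m + 1)) / (1 - α))
        ≤ α ^ (n - i) * β n := by
          exact mul_le_mul_of_nonneg_left this hpow.le
end

section
/- Let 0 < α < 1 and β : ℕ → ℝ, and define the TDGM reward x(i,n) = α^{n-i}·β(n) for 1 ≤ i ≤ n. Then x is collusion-proof, i.e. x(i,n) ≤ Σ_{k=0}^{m} x(i+k, n+m) for all m ≥ 1 and all 1 ≤ i ≤ n, if and only if β(n) - β(n+m)·(1-α^{m+1})/(1-α) ≤ 0 for all n ≥ 1 and all m ≥ 1. -/
/-- The TDGM `x(i,n) = α^{n-i}·β(n)` is collusion-proof iff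
`β(n) - β(n+m)·(1-α^{m+1})/(1-α) ≤ 0` for all `n, m ≥ 1`. -/
theorem TDGM_CP_iff (α : ℝ) (hα0 : 0 < α) (hα1 : α < 1)
    (β : ℕ → ℝ) (x : ℕ → ℕ → ℝ)
    (hx : ∀ i n : ℕ, x i n = α ^ (n - i) * β n) :
    (∀ m i n : ℕ, 1 ≤ m → 1 ≤ i → i ≤ n →
      x i n ≤ ∑ k ∈ Finset.range (m + 1), x (i + k) (n + m)) ↔
    (∀ n m : ℕ, 1 ≤ n → 1 ≤ m →
      β n - β (n + m) * (1 - α ^ (m + 1)) / (1 - α) ≤ 0) := by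
  have hαne : α ≠ 1 := ne_of_lt hα1
  have h1α : (0:ℝ) < 1 - α := by linarith
  have key : ∀ m i n : ℕ, i ≤ n →
      ∑ k ∈ Finset.range (m + 1), x (i + k) (n + m)
        = α ^ (n - i) * (β (n + m) * (1 - α ^ (m + 1)) / (1 - α)) := by
    intro m i n hin
    have : ∀ k ∈ Finset.range (m + 1),
        x (i + k) (n + m) = α ^ (n - i) * (α ^ (m - k) * β (n + m)) := by
      intro k hk
      have hk' : k ≤ m := Nat.lt_succ_iff.mp (Finset.mem_range.mp hk)
      rw [hx]
      have : n + m - (i + k) = (n - i) + (m - k) := by omega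
      rw [this, pow_add, mul_assoc]
    rw [Finset.sum_congr rfl this, ← Finset.mul_sum, ← Finset.sum_mul]
    have hsum : ∑ k ∈ Finset.range (m + 1), α ^ (m - k)
        = ∑ k ∈ Finset.range (m + 1), α ^ k := by
      apply Finset.sum_nbij' (fun k => m - k) (fun k => m - k)
      all_goals intro a ha <;> simp_all [Finset.mem_range, Nat.lt_succ_iff] <;> omega
    rw [hsum, geom_sum_eq hαne,
      show (1 - α ^ (m+1)) = -(α ^ (m+1) - 1) by ring,
      show (1 - α) = -(α - 1) by ring, ← neg_div_neg_eq (α ^ (m+1) - 1)]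
    ring
  constructor
  · intro hCP n m hn hm
    have h := hCP m 1 n hm le_rfl hn
    rw [hx, key m 1 n hn] at h
    have hp : (0:ℝ) < α ^ (n - 1) := pow_pos hα0 _
    nlinarith [mul_le_mul_of_nonneg_left h (le_of_lt (inv_pos.mpr hp))]
  · intro hB m i n hm hi hin
    have hn : 1 ≤ n := le_trans hi hin
    have h := hB n m hn hm
    rw [hx, key m i n hin]
    have hp : (0:ℝ) ≤ α ^ (n - i) := le_of_lt (pow_pos hα0 _)
    have : β n ≤ β (n + m) * (1 - α ^ (m + 1)) / (1 - α) := by linarith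
    exact mul_le_mul_of_nonneg_left this hp
end

section
/- Let 0 < α < 1 and Π > 0, and define the Double Geometric Mechanism (DGM) reward x(i,n) = α^{n-i}·(1+α)^{-(n-1)}·Π for 1 ≤ i ≤ n. Then x is Sybil-proof: for every λ ≥ 1 and all 1 ≤ i ≤ n, Σ_{k=0}^{λ} x(i+k, n+λ) ≤ x(i,n). Equivalently, the solver-reward β(n) = (1+α)^{-(n-1)}·Π satisfies β(n) ≥ β(n+m)·(1-α^{m+1})/(1-α) for all n, m ≥ 1. -/
lemma DGM_geom_le_pow (α : ℝ) (h0 : 0 ≤ α) :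
    ∀ L : ℕ, ∑ j ∈ Finset.range (L + 1), α ^ j ≤ (1 + α) ^ L := by
  intro L
  induction L with
  | zero => simp
  | succ L ih =>
    rw [Finset.sum_range_succ]
    have h1 : α ^ (L + 1) ≤ α * (1 + α) ^ L := by
      rw [pow_succ']
      exact mul_le_mul_of_nonneg_left (pow_le_pow_left₀ h0 (by linarith) L) h0
    calc ∑ j ∈ Finset.range (L + 1), α ^ j + α ^ (L + 1)
        ≤ (1 + α) ^ L + α * (1 + α) ^ L := by gcongr
      _ = (1 + α) ^ (L + 1) := by ring

/-- The Double Geometric Mechanism `x(i,n) = α^{n-i}·(1+α)^{-(n-1)}·Π` is Sybil-proof;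
equivalently its solver-reward `β(n) = (1+α)^{-(n-1)}·Π` satisfies
`β(n) ≥ β(n+m)·(1-α^{m+1})/(1-α)` for all `n, m ≥ 1`. -/
theorem DGM_Sybil_proof (α Budget : ℝ) (hα0 : 0 < α) (hα1 : α < 1) (hBudget : 0 < Budget)
    (x : ℕ → ℕ → ℝ)
    (hx : ∀ i n : ℕ, x i n = α ^ (n - i) / (1 + α) ^ (n - 1) * Budget) :
    (∀ lam i n : ℕ, 1 ≤ lam → 1 ≤ i → i ≤ n →
      ∑ k ∈ Finset.range (lam + 1), x (i + k) (n + lam) ≤ x i n) ∧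
    (∀ n m : ℕ, 1 ≤ n → 1 ≤ m →
      Budget / (1 + α) ^ (n + m - 1) * ((1 - α ^ (m + 1)) / (1 - α)) ≤
        Budget / (1 + α) ^ (n - 1)) := by
  have h1 : (0:ℝ) < 1 + α := by linarith
  constructor
  · intro lam i n hlam hi hin
    rw [hx]
    have hstep : ∑ k ∈ Finset.range (lam + 1), x (i + k) (n + lam)
        = (α ^ (n - i) * ∑ j ∈ Finset.range (lam + 1), α ^ j)
            / ((1 + α) ^ (n - 1) * (1 + α) ^ lam) * Budget := by
      have h2 : ∀ k ∈ Finset.range (lam + 1), x (i + k) (n + lam)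
          = α ^ ((n - i) + (lam - k)) / ((1 + α) ^ (n - 1) * (1 + α) ^ lam) * Budget := by
        intro k hk
        have hk' : k ≤ lam := by simpa using Nat.lt_succ_iff.mp (Finset.mem_range.mp hk)
        rw [hx]
        congr 2
        · congr 1; omega
        · rw [← pow_add]; congr 1; omega
      rw [Finset.sum_congr rfl h2, ← Finset.sum_mul, ← Finset.sum_div]
      congr 2
      have : ∑ k ∈ Finset.range (lam + 1), α ^ ((n - i) + (lam - k))
          = ∑ k ∈ Finset.range (lam + 1), α ^ (n - i) * α ^ (lam - k) := by
        apply Finset.sum_congr rfl; intro k hk; rw [pow_add]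
      rw [this, ← Finset.mul_sum]
      congr 1
      have := Finset.sum_range_reflect (fun j => α ^ j) (lam + 1)
      simpa using this
    rw [hstep]
    calc (α ^ (n - i) * ∑ j ∈ Finset.range (lam + 1), α ^ j)
            / ((1 + α) ^ (n - 1) * (1 + α) ^ lam) * Budget
        ≤ (α ^ (n - i) * (1 + α) ^ lam)
            / ((1 + α) ^ (n - 1) * (1 + α) ^ lam) * Budget := by
          gcongr α ^ (n - i) * ?_ / ((1 + α) ^ (n - 1) * (1 + α) ^ lam) * Budget
          exact DGM_geom_le_pow α hα0.le lam
      _ = α ^ (n - i) / (1 + α) ^ (n - 1) * Budget := by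
          rw [mul_div_mul_right _ _ (by positivity : ((1 + α) ^ lam : ℝ) ≠ 0)]
  · intro n m hn hm
    have hgeom : (1 - α ^ (m + 1)) / (1 - α) = ∑ j ∈ Finset.range (m + 1), α ^ j := by
      rw [geom_sum_eq hα1.ne]
      rw [div_eq_div_iff (by linarith) (by linarith : α - 1 ≠ 0)]
      ring
    have hle : (1 - α ^ (m + 1)) / (1 - α) ≤ (1 + α) ^ m := by
      rw [hgeom]; exact DGM_geom_le_pow α hα0.le m
    have hsplit : (n + m - 1) = (n - 1) + m := by omega
    rw [hsplit, pow_add]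
    calc Budget / ((1 + α) ^ (n - 1) * (1 + α) ^ m) * ((1 - α ^ (m + 1)) / (1 - α))
        ≤ Budget / ((1 + α) ^ (n - 1) * (1 + α) ^ m) * (1 + α) ^ m := by
          gcongr Budget / ((1 + α) ^ (n - 1) * (1 + α) ^ m) * ?_
      _ = Budget / (1 + α) ^ (n - 1) := by
          field_simp
end

section
/- Let 0 < α < 1 and Π > 0, and define the δ-Geometric Mechanism reward x(i,n) = α^{n-i}·((1-α)/(1-α^n))·Π for 1 ≤ i ≤ n. Then x is collusion-proof: for every γ ≥ 1 and all 1 ≤ i ≤ n, x(i,n) ≤ Σ_{k=0}^{γ} x(i+k, n+γ). Equivalently, the solver-reward β(n) = ((1-α)/(1-α^n))·Π satisfies β(n) ≤ β(n+m)·(1-α^{m+1})/(1-α) for all n, m ≥ 1. -/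
/-- The δ-Geometric Mechanism `x(i,n) = α^{n-i}·((1-α)/(1-α^n))·Π` is collusion-proof;
equivalently its solver-reward `β(n) = ((1-α)/(1-α^n))·Π` satisfies
`β(n) ≤ β(n+m)·(1-α^{m+1})/(1-α)` for all `n, m ≥ 1`. -/
theorem deltaGEOM_collusion_proof (α Budget : ℝ) (hα0 : 0 < α) (hα1 : α < 1)
    (hBudget : 0 < Budget)
    (x : ℕ → ℕ → ℝ)
    (hx : ∀ i n : ℕ, x i n = α ^ (n - i) * ((1 - α) / (1 - α ^ n)) * Budget) :
    (∀ gam i n : ℕ, 1 ≤ gam → 1 ≤ i → i ≤ n →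
      x i n ≤ ∑ k ∈ Finset.range (gam + 1), x (i + k) (n + gam)) ∧
    (∀ n m : ℕ, 1 ≤ n → 1 ≤ m →
      (1 - α) / (1 - α ^ n) * Budget ≤
        (1 - α) / (1 - α ^ (n + m)) * Budget * ((1 - α ^ (m + 1)) / (1 - α))) := by
  have hne : (1:ℝ) - α ≠ 0 := by linarith
  have key : ∀ n m : ℕ, 1 ≤ n → 1 ≤ m →
      (1 - α) / (1 - α ^ n) * Budget ≤
        (1 - α) / (1 - α ^ (n + m)) * Budget * ((1 - α ^ (m + 1)) / (1 - α)) := by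
    intro n m hn hm
    have hpn : 0 < 1 - α ^ n := sub_pos.2 (pow_lt_one₀ hα0.le hα1 (by omega))
    have hpnm : 0 < 1 - α ^ (n + m) := sub_pos.2 (pow_lt_one₀ hα0.le hα1 (by omega))
    have h1 : α ^ m ≤ 1 := pow_le_one₀ hα0.le hα1.le
    have h2 : α ^ n ≤ α := by
      calc α ^ n ≤ α ^ 1 := pow_le_pow_of_le_one hα0.le hα1.le hn
        _ = α := pow_one α
    have h3 : (0:ℝ) ≤ (1 - α ^ m) * (α - α ^ n) :=
      mul_nonneg (by linarith) (by linarith)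
    have e1 : α ^ (m + 1) = α ^ m * α := pow_succ α m
    have e2 : α ^ (n + m) = α ^ n * α ^ m := pow_add α n m
    have hdiv : (1 - α) / (1 - α ^ n) ≤ (1 - α ^ (m + 1)) / (1 - α ^ (n + m)) := by
      rw [div_le_div_iff₀ hpn hpnm]
      nlinarith
    have heq : (1 - α) / (1 - α ^ (n + m)) * Budget * ((1 - α ^ (m + 1)) / (1 - α)) =
        (1 - α ^ (m + 1)) / (1 - α ^ (n + m)) * Budget := by
      field_simp
    rw [heq]
    exact mul_le_mul_of_nonneg_right hdiv hBudget.le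
  refine ⟨?_, key⟩
  intro gam i n hgam hi hin
  have hgeom : ∑ k ∈ Finset.range (gam + 1), α ^ (gam - k) = (1 - α ^ (gam + 1)) / (1 - α) := by
    rw [show (∑ k ∈ Finset.range (gam + 1), α ^ (gam - k))
        = ∑ k ∈ Finset.range (gam + 1), α ^ (gam + 1 - 1 - k) by rfl,
      Finset.sum_range_reflect (fun j => α ^ j) (gam + 1), geom_sum_eq hα1.ne]
    rw [← neg_sub (α ^ (gam+1)) 1, ← neg_sub α 1, neg_div_neg_eq]
  have hsum : ∑ k ∈ Finset.range (gam + 1), x (i + k) (n + gam)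
      = α ^ (n - i) * ((1 - α) / (1 - α ^ (n + gam)) * Budget * ((1 - α ^ (gam + 1)) / (1 - α))) := by
    have hterm : ∀ k ∈ Finset.range (gam + 1), x (i + k) (n + gam)
        = α ^ (n - i) * ((1 - α) / (1 - α ^ (n + gam)) * Budget) * α ^ (gam - k) := by
      intro k hk
      have hk' : k ≤ gam := by simpa [Nat.lt_succ_iff] using hk
      rw [hx, show n + gam - (i + k) = (n - i) + (gam - k) by omega, pow_add]
      ring
    rw [Finset.sum_congr rfl hterm, ← Finset.mul_sum, hgeom]
    ring
  rw [hx, hsum]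
  have h := key n gam (by omega) hgam
  calc α ^ (n - i) * ((1 - α) / (1 - α ^ n)) * Budget
      = α ^ (n - i) * ((1 - α) / (1 - α ^ n) * Budget) := by ring
    _ ≤ α ^ (n - i) * ((1 - α) / (1 - α ^ (n + gam)) * Budget * ((1 - α ^ (gam + 1)) / (1 - α))) :=
        mul_le_mul_of_nonneg_left h (pow_nonneg hα0.le _)
end

section
/- Let 0 < α < 1 and Π > 0, and define the Double Geometric Mechanism (DGM) reward x(i,n) = α^{n-i}·(1+α)^{-(n-1)}·Π for 1 ≤ i ≤ n. Then a single Sybil attack (equivalently, a merger of two adjacent agents) is exactly reward-neutral: for all 1 ≤ i ≤ n, x(i,n) = x(i, n+1) + x(i+1, n+1). -/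
/-- Under the Double Geometric Mechanism `x(i,n) = α^{n-i}·(1+α)^{-(n-1)}·Π`, a single
Sybil attack is exactly reward-neutral: `x(i,n) = x(i,n+1) + x(i+1,n+1)` for `1 ≤ i ≤ n`. -/
theorem DGM_single_sybil_neutral (α Budget : ℝ) (hα0 : 0 < α) (hα1 : α < 1)
    (hBudget : 0 < Budget)
    (x : ℕ → ℕ → ℝ)
    (hx : ∀ i n : ℕ, x i n = α ^ (n - i) / (1 + α) ^ (n - 1) * Budget) :
    ∀ i n : ℕ, 1 ≤ i → i ≤ n →
      x i n = x i (n + 1) + x (i + 1) (n + 1) := by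
  intro i n hi hin
  rw [hx, hx, hx]
  have h1 : n + 1 - i = (n - i) + 1 := by omega
  have h2 : n + 1 - (i + 1) = n - i := by omega
  have h3 : n + 1 - 1 = (n - 1) + 1 := by omega
  rw [h1, h2, h3]
  have hne : (1 + α) ^ (n - 1) ≠ 0 := by positivity
  have hne2 : (1 + α) ≠ 0 := by positivity
  field_simp
  ring
end

section
/- Let 0 < α < 1 and let β : ℕ → ℝ satisfy β(n) > 0 for all n ≥ 1 and the collusion-proofness condition β(n) ≤ β(n+m)·(1-α^{m+1})/(1-α) for all n, m ≥ 1. Then the TDGM reward x(i,n) = α^{n-i}·β(n) is not λ-Sybil-proof for any λ: for every λ ≥ 1 there exist n ≥ 1 and 1 ≤ i ≤ n with x(i,n) < Σ_{k=0}^{λ} x(i+k, n+λ), i.e. there exists n with β(n) < β(n+λ)·(1-α^{λ+1})/(1-α). -/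
/-- A collusion-proof TDGM with positive solver-reward is not λ-Sybil-proof for any λ ≥ 1:
for every λ ≥ 1 some agent strictly gains from λ Sybil attacks; equivalently there is an
`n` with `β(n) < β(n+λ)·(1-α^{λ+1})/(1-α)`. -/
theorem CP_TDGM_never_SP (α : ℝ) (hα0 : 0 < α) (hα1 : α < 1)
    (β : ℕ → ℝ) (hβpos : ∀ n : ℕ, 1 ≤ n → 0 < β n)
    (hCP : ∀ n m : ℕ, 1 ≤ n → 1 ≤ m →
      β n ≤ β (n + m) * (1 - α ^ (m + 1)) / (1 - α))
    (x : ℕ → ℕ → ℝ) (hx : ∀ i n : ℕ, x i n = α ^ (n - i) * β n) :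
    ∀ lam : ℕ, 1 ≤ lam →
      (∃ n i : ℕ, 1 ≤ n ∧ 1 ≤ i ∧ i ≤ n ∧
        x i n < ∑ k ∈ Finset.range (lam + 1), x (i + k) (n + lam)) ∧
      (∃ n : ℕ, 1 ≤ n ∧ β n < β (n + lam) * (1 - α ^ (lam + 1)) / (1 - α)) := by
  intro lam hlam
  have h1α : (0:ℝ) < 1 - α := by linarith
  set c : ℝ := (1 - α ^ (lam + 1)) / (1 - α) with hc
  have hc1 : 1 < c := by
    rw [hc, lt_div_iff₀ h1α]
    have h2 : α ^ (lam + 1) ≤ α ^ 2 := by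
      apply pow_le_pow_of_le_one (le_of_lt hα0) (le_of_lt hα1)
      omega
    nlinarith
  -- main claim: ∃ n, 1 ≤ n ∧ β n < β (n+lam) * c
  have key : ∃ n : ℕ, 1 ≤ n ∧ β n < β (n + lam) * (1 - α ^ (lam + 1)) / (1 - α) := by
    by_contra hcon
    push_neg at hcon
    -- so ∀ n ≥ 1, β(n+lam) * c ≤ β n
    have hstep : ∀ n : ℕ, 1 ≤ n → β (n + lam) * c ≤ β n := by
      intro n hn
      have := hcon n hn
      rw [hc]
      calc β (n + lam) * ((1 - α ^ (lam + 1)) / (1 - α))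
          = β (n + lam) * (1 - α ^ (lam + 1)) / (1 - α) := by ring
        _ ≤ β n := this
    have hiter : ∀ k : ℕ, β (1 + k * lam) * c ^ k ≤ β 1 := by
      intro k
      induction k with
      | zero => simp
      | succ k ih =>
        have h1 : (1:ℕ) ≤ 1 + k * lam := by omega
        have h2 := hstep (1 + k * lam) h1
        have hck : (0:ℝ) < c ^ k := pow_pos (by linarith) k
        have : β (1 + k * lam + lam) * c * c ^ k ≤ β (1 + k * lam) * c ^ k :=
          mul_le_mul_of_nonneg_right h2 (le_of_lt hck)
        have heq : 1 + (k + 1) * lam = 1 + k * lam + lam := by ring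
        calc β (1 + (k + 1) * lam) * c ^ (k + 1)
            = β (1 + k * lam + lam) * c * c ^ k := by rw [heq]; ring
          _ ≤ β (1 + k * lam) * c ^ k := this
          _ ≤ β 1 := ih
    -- lower bound: β(1 + k*lam) ≥ (1-α) * β 1 for k ≥ 1
    have hlow : ∀ k : ℕ, 1 ≤ k → (1 - α) * β 1 ≤ β (1 + k * lam) := by
      intro k hk
      have hm : 1 ≤ k * lam := Nat.one_le_iff_ne_zero.mpr (by positivity)
      have h := hCP 1 (k * lam) le_rfl hm
      have hb : 0 < β (1 + k * lam) := hβpos _ (by omega)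
      have hαp : 0 < α ^ (k * lam + 1) := pow_pos hα0 _
      have hαp1 : α ^ (k * lam + 1) < 1 := pow_lt_one₀ (le_of_lt hα0) hα1 (by omega)
      rw [le_div_iff₀ h1α] at h
      nlinarith
    -- contradiction: c^k unbounded
    obtain ⟨k, hk⟩ := pow_unbounded_of_one_lt (β 1 / ((1 - α) * β 1)) hc1
    set k' := k + 1
    have hk'1 : 1 ≤ k' := Nat.le_add_left 1 k
    have hck : c ^ k ≤ c ^ k' := pow_le_pow_right₀ (le_of_lt hc1) (Nat.le_succ k)
    have hβ1 : 0 < β 1 := hβpos 1 le_rfl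
    have hl := hlow k' hk'1
    have hi := hiter k'
    have hpos : (0:ℝ) < (1 - α) * β 1 := by positivity
    have : (1 - α) * β 1 * c ^ k' ≤ β 1 := by
      calc (1 - α) * β 1 * c ^ k' ≤ β (1 + k' * lam) * c ^ k' :=
            mul_le_mul_of_nonneg_right hl (pow_pos (by linarith) k').le
        _ ≤ β 1 := hi
    have h2 : β 1 / ((1 - α) * β 1) < c ^ k' := lt_of_lt_of_le hk hck
    rw [div_lt_iff₀ hpos] at h2
    nlinarith
  refine ⟨?_, key⟩
  obtain ⟨n, hn1, hn⟩ := key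
  refine ⟨n, n, hn1, hn1, le_rfl, ?_⟩
  rw [hx]
  have hsum : ∑ k ∈ Finset.range (lam + 1), x (n + k) (n + lam)
      = β (n + lam) * (1 - α ^ (lam + 1)) / (1 - α) := by
    have h1 : ∀ k ∈ Finset.range (lam + 1),
        x (n + k) (n + lam) = α ^ (lam - k) * β (n + lam) := by
      intro k hk
      rw [hx]
      congr 2
      omega
    rw [Finset.sum_congr rfl h1, ← Finset.sum_mul]
    have h2 : ∑ k ∈ Finset.range (lam + 1), α ^ (lam - k)
        = ∑ k ∈ Finset.range (lam + 1), α ^ k := by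
      rw [← Finset.sum_range_reflect]
      apply Finset.sum_congr rfl
      intro k hk
      simp only [Finset.mem_range] at hk
      congr 1
      omega
    rw [h2, geom_sum_eq (ne_of_lt hα1)]
    have h3 : (α ^ (lam + 1) - 1) / (α - 1) = (1 - α ^ (lam + 1)) / (1 - α) := by
      rw [div_eq_div_iff (by linarith) (by linarith)]; ring
    rw [h3]; ring
  rw [hsum]
  simp only [Nat.sub_self, pow_zero, one_mul]
  exact hn
end

section
/- Let 0 < α < 1 and n ≥ 1. Then Σ_{i=1}^{n} α^{n-i}·(1+α)^{-i} < 1; moreover, if α(1+α) ≠ 1, this sum equals (1 - α^n(1+α)^n) / ((1+α)^n - α(1+α)^{n+1}). Consequently, the GCRM with budget Π > 0, x(i,n) = α^{n-i}·(1+α)^{-i}·Π, is budget balanced: Σ_{i=1}^{n} x(i,n) < Π for every n. -/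
lemma GCRM_key (α : ℝ) (hα0 : 0 < α) (n : ℕ) :
    ∑ i ∈ Finset.Icc 1 n, α ^ (n - i) / (1 + α) ^ i =
      (∑ j ∈ Finset.range n, (α * (1 + α)) ^ j) / (1 + α) ^ n := by
  have h1 : (0:ℝ) < 1 + α := by linarith
  rw [Finset.sum_div, ← Finset.sum_range_reflect, ← Finset.Ico_add_one_right_eq_Icc, Finset.sum_Ico_eq_sum_range]
  norm_num
  apply Finset.sum_congr rfl
  intro k hk
  simp only [Finset.mem_range] at hk
  have h2 : n - (1 + k) = n - 1 - k := by omega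
  have h3 : (1 + α) ^ n = (1 + α) ^ (n - 1 - k) * (1 + α) ^ (1 + k) := by
    rw [← pow_add]; congr 1; omega
  rw [h2, h3, mul_pow]
  rw [div_eq_div_iff (by positivity) (by positivity)]
  ring

lemma GCRM_geom_lt (α : ℝ) (hα0 : 0 < α) (hα1 : α < 1) :
    ∀ n : ℕ, 1 ≤ n → (∑ j ∈ Finset.range n, (α * (1 + α)) ^ j) < (1 + α) ^ n := by
  intro n hn
  induction n with
  | zero => omega
  | succ m ih =>
    rcases Nat.eq_or_lt_of_le hn with h | h
    · simp only [← h]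
      norm_num
      linarith
    · have hm : 1 ≤ m := by omega
      have := ih hm
      rw [Finset.sum_range_succ, pow_succ (1 + α)]
      have hαm : α ^ m ≤ α := by
        calc α ^ m ≤ α ^ 1 := pow_le_pow_of_le_one (le_of_lt hα0) (le_of_lt hα1) hm
        _ = α := pow_one α
      have hpos : (0:ℝ) < (1 + α) ^ m := by positivity
      have : (α * (1 + α)) ^ m = α ^ m * (1 + α) ^ m := mul_pow _ _ _
      nlinarith [pow_pos hα0 m]

/-- GCRM budget balance: `∑_{i=1}^n α^{n-i}(1+α)^{-i} < 1`; if `α(1+α) ≠ 1` the sum has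
the closed form `(1-α^n(1+α)^n)/((1+α)^n - α(1+α)^{n+1})`; and `∑ x(i,n) < Π`. -/
theorem GCRM_budget_balanced (α : ℝ) (hα0 : 0 < α) (hα1 : α < 1)
    (n : ℕ) (hn : 1 ≤ n) (Budget : ℝ) (hBudget : 0 < Budget) :
    (∑ i ∈ Finset.Icc 1 n, α ^ (n - i) / (1 + α) ^ i < 1) ∧
    (α * (1 + α) ≠ 1 →
      ∑ i ∈ Finset.Icc 1 n, α ^ (n - i) / (1 + α) ^ i =
        (1 - α ^ n * (1 + α) ^ n) / ((1 + α) ^ n - α * (1 + α) ^ (n + 1))) ∧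
    (∑ i ∈ Finset.Icc 1 n, α ^ (n - i) / (1 + α) ^ i * Budget < Budget) := by
  have hpow : (0:ℝ) < (1 + α) ^ n := by positivity
  have hkey := GCRM_key α hα0 n
  have hgeom := GCRM_geom_lt α hα0 hα1 n hn
  have hlt : ∑ i ∈ Finset.Icc 1 n, α ^ (n - i) / (1 + α) ^ i < 1 := by
    rw [hkey, div_lt_one hpow]; exact hgeom
  refine ⟨hlt, ?_, ?_⟩
  · intro hne
    rw [hkey, geom_sum_eq hne n]
    have h1 : α * (1 + α) - 1 ≠ 0 := sub_ne_zero_of_ne hne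
    have h2 : ((1 + α) ^ n : ℝ) ≠ 0 := ne_of_gt hpow
    rw [div_div]
    rw [show (1 - α ^ n * (1 + α) ^ n) = -(((α * (1 + α)) ^ n - 1)) by
      rw [mul_pow]; ring]
    rw [show ((1 + α) ^ n - α * (1 + α) ^ (n + 1)) =
      -((α * (1 + α) - 1) * (1 + α) ^ n) by rw [pow_succ]; ring]
    rw [neg_div_neg_eq]
  · have := hlt
    rw [← Finset.sum_mul]
    calc (∑ i ∈ Finset.Icc 1 n, α ^ (n - i) / (1 + α) ^ i) * Budget
        < 1 * Budget := by apply mul_lt_mul_of_pos_right hlt hBudget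
      _ = Budget := one_mul Budget
end

section
/- Let 0 < α < 1, Π > 0, and define the GCRM reward x(i,n) = α^{n-i}·(1+α)^{-i}·Π for 1 ≤ i ≤ n. Then for all 1 ≤ i < n, x(i,n) = α(1+α)·x(i+1,n); moreover α(1+α) ≤ 1 if and only if α ≤ (√5 - 1)/2, so GCRM is ρ-split with ρ = α(1+α) ∈ (0,1] exactly when 0 < α ≤ (√5 - 1)/2. -/
/-- GCRM split ratio: `x(i,n) = α(1+α)·x(i+1,n)` for `1 ≤ i < n`, and
`α(1+α) ≤ 1 ↔ α ≤ (√5-1)/2`; moreover `α(1+α) > 0`, so GCRM is `ρ`-split with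
`ρ = α(1+α) ∈ (0,1]` exactly when `0 < α ≤ (√5-1)/2`. -/
theorem GCRM_split (α Budget : ℝ) (hα0 : 0 < α) (hα1 : α < 1) (hBudget : 0 < Budget)
    (x : ℕ → ℕ → ℝ)
    (hx : ∀ i n : ℕ, x i n = α ^ (n - i) / (1 + α) ^ i * Budget) :
    (∀ i n : ℕ, 1 ≤ i → i < n → x i n = α * (1 + α) * x (i + 1) n) ∧
    (0 < α * (1 + α)) ∧
    (α * (1 + α) ≤ 1 ↔ α ≤ (Real.sqrt 5 - 1) / 2) := by
  have h1α : (0:ℝ) < 1 + α := by linarith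
  have hs : Real.sqrt 5 ^ 2 = 5 := Real.sq_sqrt (by norm_num)
  have hs0 : 0 < Real.sqrt 5 := Real.sqrt_pos.mpr (by norm_num)
  refine ⟨?_, by nlinarith, ?_, ?_⟩
  · intro i n hi hin
    rw [hx, hx]
    have hni : n - i = (n - (i + 1)) + 1 := by omega
    rw [hni, pow_succ, pow_succ]
    field_simp
  · intro h
    nlinarith
  · intro h
    nlinarith
end

section
/- Let 0 < α < 1 with α(1+α) ≠ 1, Π > 0, and define the GCRM reward x(i,n) = α^{n-i}·(1+α)^{-i}·Π for 1 ≤ i ≤ n. Then for every λ ≥ 0 and all 1 ≤ i ≤ n, Σ_{k=0}^{λ} x(i+k, n+λ) = f(α,λ)·x(i,n), where f(α,λ) = (1 - α^{λ+1}(1+α)^{λ+1}) / ((1+α)^{λ} - α(1+α)^{λ+1}). -/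
/-- GCRM Sybil-gain identity: for every `λ ≥ 0` and `1 ≤ i ≤ n`,
`∑_{k=0}^{λ} x(i+k, n+λ) = f(α,λ)·x(i,n)` with
`f(α,λ) = (1-α^{λ+1}(1+α)^{λ+1})/((1+α)^{λ} - α(1+α)^{λ+1})`. -/
theorem GCRM_sybil_gain_identity (α Budget : ℝ) (hα0 : 0 < α) (hα1 : α < 1)
    (hne : α * (1 + α) ≠ 1) (hBudget : 0 < Budget)
    (x : ℕ → ℕ → ℝ)
    (hx : ∀ i n : ℕ, x i n = α ^ (n - i) / (1 + α) ^ i * Budget) :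
    ∀ lam i n : ℕ, 1 ≤ i → i ≤ n →
      ∑ k ∈ Finset.range (lam + 1), x (i + k) (n + lam) =
        (1 - α ^ (lam + 1) * (1 + α) ^ (lam + 1)) /
            ((1 + α) ^ lam - α * (1 + α) ^ (lam + 1)) * x i n := by
  intro lam i n hi1 hin
  have h1α : (0:ℝ) < 1 + α := by linarith
  obtain ⟨β, hβdef⟩ : ∃ β : ℝ, β = α * (1 + α) := ⟨_, rfl⟩
  have hβ1 : (1:ℝ) - β ≠ 0 := fun h => hne (by rw [← hβdef]; linarith [sub_eq_zero.mp h])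
  have hpow : ((1+α):ℝ)^lam ≠ 0 := by positivity
  have hgeom : (1 - β^(lam+1)) = (1 - β) * ∑ j ∈ Finset.range (lam+1), β^j := by
    linear_combination geom_sum_mul β (lam+1)
  -- Step 1: the sum equals (∑ β^j)/(1+α)^lam * x i n
  have hterm : ∀ k ∈ Finset.range (lam+1),
      x (i+k) (n+lam) = β^(lam-k)/(1+α)^lam * x i n := by
    intro k hk
    have hk' : k ≤ lam := Nat.lt_succ_iff.mp (Finset.mem_range.mp hk)
    have hexp : n + lam - (i + k) = (n - i) + (lam - k) := by omega
    rw [hx, hx, hexp, pow_add]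
    have h1 : β^(lam-k) = α^(lam-k) * (1+α)^(lam-k) := by rw [hβdef]; exact mul_pow α (1+α) _
    have h2 : ((1+α):ℝ)^lam = (1+α)^(lam-k) * (1+α)^k := by
      rw [← pow_add]; congr 1; omega
    have h3 : ((1+α):ℝ)^(i+k) = (1+α)^i * (1+α)^k := pow_add _ _ _
    rw [h1, h2, h3]
    have hki : ((1+α):ℝ)^k ≠ 0 := by positivity
    have hkik : ((1+α):ℝ)^(lam-k) ≠ 0 := by positivity
    have hii : ((1+α):ℝ)^i ≠ 0 := by positivity
    field_simp
  rw [Finset.sum_congr rfl hterm, ← Finset.sum_mul, ← Finset.sum_div]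
  have hsum : ∑ j ∈ Finset.range (lam+1), β^(lam - j) =
      ∑ j ∈ Finset.range (lam+1), β^j := by
    rw [← Finset.sum_range_reflect]
    apply Finset.sum_congr rfl
    intro j hj
    have : j ≤ lam := Nat.lt_succ_iff.mp (Finset.mem_range.mp hj)
    congr 1; omega
  -- Step 2: f = (∑ β^j)/(1+α)^lam
  have hden : (1+α)^lam - α*(1+α)^(lam+1) = (1+α)^lam * (1 - β) := by
    rw [hβdef]; ring
  have hf : (1 - α^(lam+1) * (1+α)^(lam+1)) /
      ((1+α)^lam - α*(1+α)^(lam+1)) =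
      (∑ j ∈ Finset.range (lam+1), β^j) / (1+α)^lam := by
    rw [hden]
    have hnum : 1 - α^(lam+1) * (1+α)^(lam+1) = 1 - β^(lam+1) := by
      rw [hβdef, mul_pow]
    rw [hnum, hgeom]
    rw [mul_comm ((1+α)^lam) (1-β), mul_div_mul_left _ _ hβ1]
  rw [hsum, hf]
end

section
/- Let 0 < α < 1, Π > 0, and define the GCRM reward x(i,n) = α^{n-i}·(1+α)^{-i}·Π for 1 ≤ i ≤ n. Suppose λ* ≥ 2 is the smallest integer λ ≥ 1 such that Σ_{k=0}^{λ} x(i+k, n+λ) ≤ x(i,n) holds for all 1 ≤ i ≤ n (i.e. f(α,λ*) ≤ 1 and f(α,λ) > 1 for 1 ≤ λ < λ*). Then GCRM is λ*-collusion-proof: for all 1 ≤ i ≤ n, x(i,n) ≤ Σ_{k=0}^{λ*-1} x(i+k, n+λ*-1). -/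
/-- If `λ* ≥ 2` is the smallest integer `λ ≥ 1` for which GCRM is λ-Sybil-proof,
then GCRM is λ*-collusion-proof: `x(i,n) ≤ ∑_{k=0}^{λ*-1} x(i+k, n+λ*-1)`. -/
theorem GCRM_lamStar_CP (α Budget : ℝ) (hα0 : 0 < α) (hα1 : α < 1) (hBudget : 0 < Budget)
    (x : ℕ → ℕ → ℝ)
    (hx : ∀ i n : ℕ, x i n = α ^ (n - i) / (1 + α) ^ i * Budget)
    (lamStar : ℕ) (hlamStar : 2 ≤ lamStar)
    (hSPstar : ∀ i n : ℕ, 1 ≤ i → i ≤ n →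
      ∑ k ∈ Finset.range (lamStar + 1), x (i + k) (n + lamStar) ≤ x i n)
    (hmin : ∀ lam : ℕ, 1 ≤ lam → lam < lamStar →
      ¬ (∀ i n : ℕ, 1 ≤ i → i ≤ n →
        ∑ k ∈ Finset.range (lam + 1), x (i + k) (n + lam) ≤ x i n)) :
    ∀ i n : ℕ, 1 ≤ i → i ≤ n →
      x i n ≤ ∑ k ∈ Finset.range lamStar, x (i + k) (n + (lamStar - 1)) := by
  have hαpos : (0:ℝ) < 1 + α := by linarith
  set lam := lamStar - 1 with hlam
  have hlams : lam + 1 = lamStar := by omega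
  have key : ∀ i n : ℕ, i ≤ n → ∑ k ∈ Finset.range (lam + 1), x (i + k) (n + lam)
      = (∑ k ∈ Finset.range (lam + 1), α ^ (lam - k) / (1 + α) ^ k) * x i n := by
    intro i n hin
    rw [Finset.sum_mul]
    refine Finset.sum_congr rfl fun k hk => ?_
    have hk' : k ≤ lam := Nat.lt_succ_iff.mp (Finset.mem_range.mp hk)
    rw [hx, hx]
    have h1 : n + lam - (i + k) = (n - i) + (lam - k) := by omega
    rw [h1, pow_add, pow_add]
    field_simp
  have hxpos : ∀ i n : ℕ, 0 < x i n := by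
    intro i n; rw [hx]; positivity
  have h := hmin lam (by omega) (by omega)
  push_neg at h
  obtain ⟨i₀, n₀, hi₀, hin₀, hlt⟩ := h
  rw [key i₀ n₀ hin₀] at hlt
  have hS : 1 < ∑ k ∈ Finset.range (lam + 1), α ^ (lam - k) / (1 + α) ^ k := by
    by_contra hc
    push_neg at hc
    nlinarith [hxpos i₀ n₀]
  intro i n hi hin
  rw [← hlams, key i n hin]
  nlinarith [hxpos i n]
end

section
/- Let 0 < α < 1, Π > 0, and define the GCRM reward x(i,n) = α^{n-i}·(1+α)^{-i}·Π for 1 ≤ i ≤ n. Then the reward gain from any number of Sybil attacks is bounded by a factor of 2: for every integer λ ≥ 1 and all 1 ≤ i ≤ n, Σ_{k=0}^{λ} x(i+k, n+λ) < 2·x(i,n); equivalently, f(α,λ) = (1 - α^{λ+1}(1+α)^{λ+1}) / ((1+α)^{λ} - α(1+α)^{λ+1}) < 2 for all 0 < α < 1 and all integers λ ≥ 1. -/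
/-- Geometric-sum bound: for `lam ≥ 1`,
`∑_{j=0}^{lam} (α(1+α))^j ≤ (1+α^lam)(1+α)^lam`. -/
lemma GCRM_geom_sum_bound (α : ℝ) (hα0 : 0 < α) (hα1 : α < 1) :
    ∀ lam : ℕ, 1 ≤ lam →
      ∑ j ∈ Finset.range (lam + 1), (α * (1 + α)) ^ j ≤ (1 + α ^ lam) * (1 + α) ^ lam := by
  intro lam hlam
  induction lam, hlam using Nat.le_induction with
  | base =>
      simp [Finset.sum_range_succ]
      nlinarith
  | succ m hm ih =>
      rw [Finset.sum_range_succ]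
      have hαm : α ^ m ≤ α := by
        calc α ^ m ≤ α ^ 1 := pow_le_pow_of_le_one (le_of_lt hα0) (le_of_lt hα1) hm
        _ = α := pow_one α
      have hpow : (0:ℝ) < (1 + α) ^ m := by positivity
      have hkey : (1 + α ^ m) * (1 + α) ^ m + (α * (1 + α)) ^ (m + 1)
          ≤ (1 + α ^ (m + 1)) * (1 + α) ^ (m + 1) := by
        have h1 : (α * (1 + α)) ^ (m + 1) = α ^ (m+1) * (1 + α) ^ (m+1) := mul_pow _ _ _
        rw [h1, pow_succ (1 + α)]
        nlinarith
      linarith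

/-- Under GCRM, the gain from any number of Sybil attacks is bounded by a factor of 2:
`∑_{k=0}^{λ} x(i+k,n+λ) < 2·x(i,n)`; equivalently `f(α,λ) < 2` for all `λ ≥ 1`. -/
theorem GCRM_sybil_gain_lt_two (α Budget : ℝ) (hα0 : 0 < α) (hα1 : α < 1)
    (hBudget : 0 < Budget)
    (x : ℕ → ℕ → ℝ)
    (hx : ∀ i n : ℕ, x i n = α ^ (n - i) / (1 + α) ^ i * Budget)
    (f : ℕ → ℝ)
    (hf : ∀ lam : ℕ, f lam = (1 - α ^ (lam + 1) * (1 + α) ^ (lam + 1)) /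
      ((1 + α) ^ lam - α * (1 + α) ^ (lam + 1))) :
    (∀ lam i n : ℕ, 1 ≤ lam → 1 ≤ i → i ≤ n →
      ∑ k ∈ Finset.range (lam + 1), x (i + k) (n + lam) < 2 * x i n) ∧
    (∀ lam : ℕ, 1 ≤ lam → f lam < 2) := by
  have h1α : (0:ℝ) < 1 + α := by linarith
  -- the quotient `T lam / (1+α)^lam` is `< 2` for `lam ≥ 1`
  have hratio : ∀ lam : ℕ, 1 ≤ lam →
      (∑ j ∈ Finset.range (lam + 1), (α * (1 + α)) ^ j) / (1 + α) ^ lam < 2 := by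
    intro lam hlam
    have hT := GCRM_geom_sum_bound α hα0 hα1 lam hlam
    have hpow : (0:ℝ) < (1 + α) ^ lam := by positivity
    have hαl : α ^ lam < 1 := pow_lt_one₀ (le_of_lt hα0) hα1 (by omega)
    rw [div_lt_iff₀ hpow]
    calc ∑ j ∈ Finset.range (lam + 1), (α * (1 + α)) ^ j
        ≤ (1 + α ^ lam) * (1 + α) ^ lam := hT
      _ < 2 * (1 + α) ^ lam := by nlinarith
  constructor
  · intro lam i n hlam hi hin
    have hxpos : 0 < x i n := by rw [hx]; positivity
    have hkey : ∀ k ∈ Finset.range (lam + 1),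
        x (i + k) (n + lam) = x i n * ((α * (1 + α)) ^ (lam - k) / (1 + α) ^ lam) := by
      intro k hk
      have hk' : k ≤ lam := Finset.mem_range_succ_iff.mp hk
      rw [hx, hx]
      have h1 : n + lam - (i + k) = (n - i) + (lam - k) := by omega
      rw [h1, pow_add, mul_pow]
      field_simp
      have h2 : (1 + α) ^ (lam - k) * (1 + α) ^ (i + k) = (1 + α) ^ (i + lam) := by
        rw [← pow_add]; congr 1; omega
      rw [show (1 + α) ^ i * (1 + α) ^ lam = (1 + α) ^ (i + lam) from (pow_add _ _ _).symm,
        ← h2]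
      ring
    rw [Finset.sum_congr rfl hkey, ← Finset.mul_sum, ← Finset.sum_div]
    have hrefl : ∑ k ∈ Finset.range (lam + 1), (α * (1 + α)) ^ (lam - k)
        = ∑ j ∈ Finset.range (lam + 1), (α * (1 + α)) ^ j := by
      have := Finset.sum_range_reflect (fun j => (α * (1 + α)) ^ j) (lam + 1)
      simpa using this
    rw [hrefl]
    have := hratio lam hlam
    nlinarith [this, hxpos]
  · intro lam hlam
    rw [hf]
    by_cases hβ : α * (1 + α) = 1
    · have hnum : 1 - α ^ (lam + 1) * (1 + α) ^ (lam + 1) = 0 := by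
        rw [← mul_pow, hβ]; simp
      have hden : (1 + α) ^ lam - α * (1 + α) ^ (lam + 1) = 0 := by
        rw [pow_succ]
        have : α * ((1 + α) ^ lam * (1 + α)) = (α * (1 + α)) * (1 + α) ^ lam := by ring
        rw [this, hβ]; ring
      rw [hnum, hden]
      norm_num
    · have hgeom : (α * (1 + α) - 1) * ∑ j ∈ Finset.range (lam + 1), (α * (1 + α)) ^ j
          = (α * (1 + α)) ^ (lam + 1) - 1 := by
        rw [mul_comm]
        exact geom_sum_mul (α * (1 + α)) (lam + 1)
      have hden : (1 + α) ^ lam - α * (1 + α) ^ (lam + 1)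
          = (1 - α * (1 + α)) * (1 + α) ^ lam := by
        rw [pow_succ]; ring
      have hnum : 1 - α ^ (lam + 1) * (1 + α) ^ (lam + 1)
          = (1 - α * (1 + α)) * ∑ j ∈ Finset.range (lam + 1), (α * (1 + α)) ^ j := by
        rw [← mul_pow]
        nlinarith [hgeom]
      have hβ' : 1 - α * (1 + α) ≠ 0 := by
        intro h; apply hβ; linarith
      rw [hnum, hden, mul_div_mul_left _ _ hβ']
      exact hratio lam hlam
end

section
/- Let 0 < α < 1 with α(1+α) ≠ 1, and consider the real-variable Sybil-gain function g : ℝ → ℝ, g(t) = (1 - (α(1+α))^{t+1}) / ((1+α)^{t} - α(1+α)^{t+1}). Then g attains its maximum over ℝ at the unique real number λ' determined by (α(1+α))^{λ'} = -log(1+α) / (α(1+α)·log α); i.e. g(t) ≤ g(λ') for all t ∈ ℝ, with g strictly increasing on (-∞, λ') and strictly decreasing on (λ', ∞). -/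
/-!
Dividing numerator and denominator by `(1+α)^t` gives
`g t = ((1+α)^(-t) - α(1+α)·α^t) / (1 - α(1+α))`, whose derivative factors as
`(1+α)^(-t) · (-α(1+α) log α) · ((α(1+α))^t - c) / (1 - α(1+α))` with
`c = -log(1+α) / (α(1+α) log α) > 0`. The first two factors are positive, and writing
`c = (α(1+α))^λ'`, the last one is positive for `t < λ'` and negative for `t > λ'`,
whether `α(1+α)` lies below or above `1`.
-/

open Real Set

theorem le_of_monotoneOn_Iic_of_antitoneOn_Ici {β γ : Type*} [LinearOrder β] [Preorder γ]
    {f : β → γ} {c : β} (h₁ : MonotoneOn f (Iic c)) (h₂ : AntitoneOn f (Ici c)) (t : β) :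
    f t ≤ f c := by
  rcases le_total t c with htc | hct
  · exact h₁ htc self_mem_Iic htc
  · exact h₂ self_mem_Ici hct hct

theorem strictMonoOn_Iic_of_hasDerivAt {f f' : ℝ → ℝ} {c : ℝ}
    (hf : ∀ x, HasDerivAt f (f' x) x) (hf' : ∀ x < c, 0 < f' x) : StrictMonoOn f (Iic c) :=
  strictMonoOn_of_deriv_pos (convex_Iic c) (fun x _ => (hf x).continuousAt.continuousWithinAt)
    fun x hx => by rw [(hf x).deriv]; exact hf' x (by simpa using hx)

theorem strictAntiOn_Ici_of_hasDerivAt {f f' : ℝ → ℝ} {c : ℝ}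
    (hf : ∀ x, HasDerivAt f (f' x) x) (hf' : ∀ x, c < x → f' x < 0) : StrictAntiOn f (Ici c) :=
  strictAntiOn_of_deriv_neg (convex_Ici c) (fun x _ => (hf x).continuousAt.continuousWithinAt)
    fun x hx => by rw [(hf x).deriv]; exact hf' x (by simpa using hx)

theorem rpow_sub_rpow_div_one_sub_pos {a s t : ℝ} (ha₀ : 0 < a) (ha₁ : a ≠ 1) (hts : t < s) :
    0 < (a ^ t - a ^ s) / (1 - a) := by
  rcases ha₁.lt_or_gt with ha₁ | ha₁
  · exact div_pos (sub_pos.2 (rpow_lt_rpow_of_exponent_gt ha₀ ha₁ hts)) (sub_pos.2 ha₁)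
  · exact div_pos_of_neg_of_neg (sub_neg.2 (rpow_lt_rpow_of_exponent_lt ha₁ hts))
      (sub_neg.2 ha₁)

theorem rpow_sub_rpow_div_one_sub_neg {a s t : ℝ} (ha₀ : 0 < a) (ha₁ : a ≠ 1) (hst : s < t) :
    (a ^ t - a ^ s) / (1 - a) < 0 := by
  rw [← neg_sub, neg_div, neg_lt_zero]
  exact rpow_sub_rpow_div_one_sub_pos ha₀ ha₁ hst

noncomputable def sybilGain (α t : ℝ) : ℝ :=
  ((1 + α) ^ (-t) - α * (1 + α) * α ^ t) / (1 - α * (1 + α))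

noncomputable def sybilGainCriticalPow (α : ℝ) : ℝ :=
  -log (1 + α) / (α * (1 + α) * log α)

section

variable {α : ℝ}

theorem sybilGain_eq (hα : 0 < α) (t : ℝ) :
    (1 - (α * (1 + α)) ^ (t + 1)) / ((1 + α) ^ t - α * (1 + α) ^ (t + 1)) = sybilGain α t := by
  have hb : 0 < 1 + α := by linarith
  rw [sybilGain, rpow_add_one (mul_pos hα hb).ne', rpow_add_one hb.ne', mul_rpow hα.le hb.le,
    rpow_neg hb.le]
  field_simp

theorem hasDerivAt_sybilGain (hα₀ : 0 < α) (hα₁ : α ≠ 1) (t : ℝ) :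
    HasDerivAt (sybilGain α) ((1 + α) ^ (-t) * -(α * (1 + α) * log α) *
      (((α * (1 + α)) ^ t - sybilGainCriticalPow α) / (1 - α * (1 + α)))) t := by
  have hb : 0 < 1 + α := by linarith
  have hlog : log α ≠ 0 := log_ne_zero_of_pos_of_ne_one hα₀ hα₁
  have h := (((hasDerivAt_neg t).const_rpow hb).sub
    ((hasStrictDerivAt_const_rpow hα₀ t).hasDerivAt.const_mul (α * (1 + α)))).div_const
    (1 - α * (1 + α))
  refine h.congr_deriv ?_
  rw [sybilGainCriticalPow, mul_rpow hα₀.le hb.le, rpow_neg hb.le]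
  field_simp
  ring

end

/-- The real-variable Sybil-gain function
`g(t) = (1 - (α(1+α))^{t+1}) / ((1+α)^t - α(1+α)^{t+1})` attains its maximum over ℝ at the
unique real `λ'` with `(α(1+α))^{λ'} = -log(1+α)/(α(1+α)·log α)`; `g` is strictly increasing
on `(-∞, λ')` and strictly decreasing on `(λ', ∞)`. -/
theorem GCRM_sybil_gain_max (α : ℝ) (hα0 : 0 < α) (hα1 : α < 1)
    (hne : α * (1 + α) ≠ 1)
    (g : ℝ → ℝ)
    (hg : ∀ t : ℝ, g t =
      (1 - (α * (1 + α)) ^ (t + 1)) / ((1 + α) ^ t - α * (1 + α) ^ (t + 1))) :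
    ∃ lam' : ℝ,
      (α * (1 + α)) ^ lam' = -Real.log (1 + α) / (α * (1 + α) * Real.log α) ∧
      (∀ t : ℝ, (α * (1 + α)) ^ t = -Real.log (1 + α) / (α * (1 + α) * Real.log α) →
        t = lam') ∧
      (∀ t : ℝ, g t ≤ g lam') ∧
      StrictMonoOn g (Set.Iio lam') ∧
      StrictAntiOn g (Set.Ioi lam') := by
  obtain rfl : g = sybilGain α := funext fun t => (hg t).trans (sybilGain_eq hα0 t)
  have ha₀ : 0 < α * (1 + α) := by positivity
  have hlog : α * (1 + α) * log α < 0 := mul_neg_of_pos_of_neg ha₀ (log_neg hα0 hα1)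
  have hslope (t : ℝ) : 0 < (1 + α) ^ (-t) * -(α * (1 + α) * log α) :=
    mul_pos (by positivity) (neg_pos.2 hlog)
  set lam' := logb (α * (1 + α)) (sybilGainCriticalPow α)
  have hcrit : (α * (1 + α)) ^ lam' = sybilGainCriticalPow α :=
    rpow_logb ha₀ hne (div_pos_of_neg_of_neg (neg_neg_of_pos (log_pos (by linarith))) hlog)
  have hmono : StrictMonoOn (sybilGain α) (Iic lam') :=
    strictMonoOn_Iic_of_hasDerivAt (hasDerivAt_sybilGain hα0 hα1.ne) fun t ht => by
      rw [← hcrit]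
      exact mul_pos (hslope t) (rpow_sub_rpow_div_one_sub_pos ha₀ hne ht)
  have hanti : StrictAntiOn (sybilGain α) (Ici lam') :=
    strictAntiOn_Ici_of_hasDerivAt (hasDerivAt_sybilGain hα0 hα1.ne) fun t ht => by
      rw [← hcrit]
      exact mul_neg_of_pos_of_neg (hslope t) (rpow_sub_rpow_div_one_sub_neg ha₀ hne ht)
  refine ⟨lam', hcrit, fun t ht => (rpow_right_inj ha₀ hne).1 (ht.trans hcrit.symm),
    le_of_monotoneOn_Iic_of_antitoneOn_Ici hmono.monotoneOn hanti.antitoneOn,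
    hmono.mono Iio_subset_Iic_self, hanti.mono Ioi_subset_Ici_self⟩
end

section
/- Let 0 < α < 1 with α(1+α) ≠ 1 and Π > 0, and consider the real-variable total-reward function T : ℝ → ℝ, T(t) = (1 - (α(1+α))^{t})·Π / ((1+α)^{t} - α(1+α)^{t+1}). Then T attains its maximum over (0,∞) at the unique real number n' = log(-log(1+α)/log α) / (log α + log(1+α)), i.e. the unique n' > 0 with (α(1+α))^{n'} = -log(1+α)/log α; T is strictly increasing on (0, n') and strictly decreasing on (n', ∞). -/
/-!
Writing `β = α(1+α)`, the total reward is `T(t) = Π/(1-β) · ((1+α)^{-t} - α^t)`, whose derivative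
factors as `Π·(-log α)·(1+α)^{-t} · (φ(t) - φ(n'))` with `φ(t) = β^t/(1-β)`. Whether `β < 1` or
`β > 1`, `φ` is strictly decreasing, so `T' > 0` before `n'` and `T' < 0` after it.
The same monotonicity of `φ` gives `n' > 0`, because `φ(n') - φ(0) = log β / ((1-β)(-log α)) < 0`.
-/

open Real Set

lemma log_div_one_sub_neg {x : ℝ} (hx0 : 0 < x) (hx1 : x ≠ 1) : log x / (1 - x) < 0 := by
  rcases hx1.lt_or_gt with h | h
  · exact div_neg_of_neg_of_pos (log_neg hx0 h) (by linarith)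
  · exact div_neg_of_pos_of_neg (log_pos h) (by linarith)

lemma strictAnti_rpow_div_one_sub {b : ℝ} (hb0 : 0 < b) (hb1 : b ≠ 1) :
    StrictAnti fun t : ℝ => b ^ t / (1 - b) := by
  intro s t hst
  rcases hb1.lt_or_gt with h | h
  · exact div_lt_div_of_pos_right (rpow_lt_rpow_of_exponent_gt hb0 h hst) (by linarith)
  · exact (div_lt_div_right_of_neg (by linarith)).2 (rpow_lt_rpow_of_exponent_lt h hst)

noncomputable def gcrmTotalReward (α B t : ℝ) : ℝ :=
  (1 - (α * (1 + α)) ^ t) * B / ((1 + α) ^ t - α * (1 + α) ^ (t + 1))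

noncomputable def gcrmCriticalLength (α : ℝ) : ℝ :=
  logb (α * (1 + α)) (-log (1 + α) / log α)

section

variable {α : ℝ}

-- At `α(1+α) = 1` both sides are `0`, by the convention `x / 0 = 0`.
lemma gcrmTotalReward_eq (hα : 0 ≤ α) (B t : ℝ) :
    gcrmTotalReward α B t = B / (1 - α * (1 + α)) * ((1 + α) ^ (-t) - α ^ t) := by
  have hα1 : 0 < 1 + α := by linarith
  rw [gcrmTotalReward, rpow_add hα1, rpow_one, mul_rpow hα (by linarith), rpow_neg hα1.le]
  field_simp

lemma hasDerivAt_gcrmTotalReward (hα : 0 < α) (B t : ℝ) :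
    HasDerivAt (gcrmTotalReward α B)
      (B / (1 - α * (1 + α)) * (1 + α) ^ (-t) * (-log (1 + α) - log α * (α * (1 + α)) ^ t))
      t := by
  have hα1 : 0 < 1 + α := by linarith
  have hneg : HasDerivAt (fun x : ℝ => (1 + α) ^ (-x)) ((1 + α) ^ (-t) * log (1 + α) * -1) t :=
    (hasStrictDerivAt_const_rpow hα1 (-t)).hasDerivAt.comp t (hasDerivAt_neg t)
  have hpos : HasDerivAt (fun x : ℝ => α ^ x) (α ^ t * log α) t :=
    (hasStrictDerivAt_const_rpow hα t).hasDerivAt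
  rw [show gcrmTotalReward α B = fun x => B / (1 - α * (1 + α)) * ((1 + α) ^ (-x) - α ^ x) from
    funext (gcrmTotalReward_eq hα.le B)]
  have hsplit : α ^ t = (α * (1 + α)) ^ t * (1 + α) ^ (-t) := by
    rw [mul_rpow hα.le hα1.le, rpow_neg hα1.le]
    field_simp [(rpow_pos_of_pos hα1 t).ne']
  exact ((hneg.sub hpos).const_mul _).congr_deriv (by rw [hsplit]; ring)

variable (hα0 : 0 < α) (hα1 : α < 1) (hβ : α * (1 + α) ≠ 1)
include hα0 hα1 hβ

lemma rpow_gcrmCriticalLength :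
    (α * (1 + α)) ^ gcrmCriticalLength α = -log (1 + α) / log α :=
  rpow_logb (by positivity) hβ (div_pos_of_neg_of_neg (neg_neg_of_pos (log_pos (by linarith)))
    (log_neg hα0 hα1))

lemma gcrmCriticalLength_pos : 0 < gcrmCriticalLength α := by
  have hβ0 : 0 < α * (1 + α) := by positivity
  have hlogα : log α < 0 := log_neg hα0 hα1
  rw [← (strictAnti_rpow_div_one_sub hβ0 hβ).lt_iff_gt, rpow_gcrmCriticalLength hα0 hα1 hβ, rpow_zero, ← sub_neg, ← sub_div]
  have hγ : -log (1 + α) / log α - 1 = log (α * (1 + α)) / -log α := by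
    rw [log_mul hα0.ne' (by linarith)]
    field_simp [hlogα.ne]
    ring
  rw [hγ, div_right_comm]
  exact div_neg_of_neg_of_pos (log_div_one_sub_neg hβ0 hβ) (by linarith)

lemma hasDerivAt_gcrmTotalReward_eq_mul_sub (B t : ℝ) :
    HasDerivAt (gcrmTotalReward α B)
      (B * -log α * (1 + α) ^ (-t) * ((α * (1 + α)) ^ t / (1 - α * (1 + α)) -
        (α * (1 + α)) ^ gcrmCriticalLength α / (1 - α * (1 + α)))) t := by
  refine (hasDerivAt_gcrmTotalReward hα0 B t).congr_deriv ?_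
  have hlogα : log α ≠ 0 := (log_neg hα0 hα1).ne
  have h1β : 1 - α * (1 + α) ≠ 0 := sub_ne_zero.2 hβ.symm
  rw [rpow_gcrmCriticalLength hα0 hα1 hβ]
  field_simp
  ring

lemma strictMonoOn_gcrmTotalReward {B : ℝ} (hB : 0 < B) :
    StrictMonoOn (gcrmTotalReward α B) (Iic (gcrmCriticalLength α)) := by
  refine strictMonoOn_of_deriv_pos (convex_Iic _)
    (fun x _ => (hasDerivAt_gcrmTotalReward hα0 B x).continuousAt.continuousWithinAt) ?_
  intro x hx
  rw [interior_Iic] at hx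
  rw [(hasDerivAt_gcrmTotalReward_eq_mul_sub hα0 hα1 hβ B x).deriv]
  have hφ := strictAnti_rpow_div_one_sub (by positivity) hβ hx
  have hK : 0 < B * -log α * (1 + α) ^ (-x) :=
    mul_pos (mul_pos hB (neg_pos.2 (log_neg hα0 hα1))) (rpow_pos_of_pos (by linarith) _)
  exact mul_pos hK (sub_pos.2 hφ)

lemma strictAntiOn_gcrmTotalReward {B : ℝ} (hB : 0 < B) :
    StrictAntiOn (gcrmTotalReward α B) (Ici (gcrmCriticalLength α)) := by
  refine strictAntiOn_of_deriv_neg (convex_Ici _)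
    (fun x _ => (hasDerivAt_gcrmTotalReward hα0 B x).continuousAt.continuousWithinAt) ?_
  intro x hx
  rw [interior_Ici] at hx
  rw [(hasDerivAt_gcrmTotalReward_eq_mul_sub hα0 hα1 hβ B x).deriv]
  have hφ := strictAnti_rpow_div_one_sub (by positivity) hβ hx
  have hK : 0 < B * -log α * (1 + α) ^ (-x) :=
    mul_pos (mul_pos hB (neg_pos.2 (log_neg hα0 hα1))) (rpow_pos_of_pos (by linarith) _)
  exact mul_neg_of_pos_of_neg hK (sub_neg.2 hφ)

end

/-- The real-variable total-reward function
`T(t) = (1 - (α(1+α))^t)·Π / ((1+α)^t - α(1+α)^{t+1})` attains its maximum over `(0,∞)` at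
the unique `n' > 0` with `(α(1+α))^{n'} = -log(1+α)/log α`, namely
`n' = log(-log(1+α)/log α) / (log α + log(1+α))`; `T` is strictly increasing on `(0, n')`
and strictly decreasing on `(n', ∞)`. -/
theorem GCRM_total_reward_max (α Budget : ℝ) (hα0 : 0 < α) (hα1 : α < 1)
    (hne : α * (1 + α) ≠ 1) (hBudget : 0 < Budget)
    (T : ℝ → ℝ)
    (hT : ∀ t : ℝ, T t =
      (1 - (α * (1 + α)) ^ t) * Budget / ((1 + α) ^ t - α * (1 + α) ^ (t + 1)))
    (n' : ℝ)
    (hn' : n' = Real.log (-Real.log (1 + α) / Real.log α) /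
      (Real.log α + Real.log (1 + α))) :
    0 < n' ∧
    (α * (1 + α)) ^ n' = -Real.log (1 + α) / Real.log α ∧
    (∀ t : ℝ, 0 < t → (α * (1 + α)) ^ t = -Real.log (1 + α) / Real.log α → t = n') ∧
    (∀ t : ℝ, 0 < t → T t ≤ T n') ∧
    StrictMonoOn T (Set.Ioo 0 n') ∧
    StrictAntiOn T (Set.Ioi n') := by
  have hT' : T = gcrmTotalReward α Budget := funext hT
  have hn'c : n' = gcrmCriticalLength α := by
    rw [hn', gcrmCriticalLength, logb, log_mul hα0.ne' (by linarith)]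
  subst hT' hn'c
  have hmono := strictMonoOn_gcrmTotalReward hα0 hα1 hne hBudget
  have hanti := strictAntiOn_gcrmTotalReward hα0 hα1 hne hBudget
  refine ⟨gcrmCriticalLength_pos hα0 hα1 hne, rpow_gcrmCriticalLength hα0 hα1 hne, ?_,
    fun t _ => isMaxOn_univ_of_mono_anti hmono.monotoneOn hanti.antitoneOn (mem_univ t),
    hmono.mono (Ioo_subset_Iio_self.trans Iio_subset_Iic_self), hanti.mono Ioi_subset_Ici_self⟩
  rintro t - ht
  rw [gcrmCriticalLength, ← ht, logb_rpow (by positivity) hne]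
end
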